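/- arXiv:2402.02774 — 3 statements merged into one kernel-verified Lean document; each statement's English description precedes it below -/
import Mathlib

section
/- Let M = (E, I) be a matroid with weights w : E → ℝ≥0 and let M* = (E, I*) be the set system whose independent sets are exactly the subsets of maximum-weight bases of M. Then M* is a matroid. -/
open Set

/-- The total weight of a set of elements. -/
noncomputable def setWeight {α : Type*} (w : α → NNReal) (S : Set α) : NNReal :=
  ∑ᶠ x ∈ S, w x

/-- A maximum-weight basis of a matroid. -/
def MaxWeightBase {α : Type*} (M : Matroid α) (w : α → NNReal) (B : Set α) : Prop :=
  M.IsBase B ∧ ∀ B', M.IsBase B' → setWeight w B' ≤ setWeight w B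

/-! If `x ∈ B \ B'` for bases `B, B'`, the fundamental circuit of `x` in `B'` meets the
fundamental cocircuit of `x` for `B` in a second element `y`, and `y` can be swapped with `x`
in both bases at once. If `B` and `B'` both have maximum weight, the two swaps force
`w x ≤ w y ≤ w x`, so `B - x + y` again has maximum weight: the maximum-weight bases satisfy the
base exchange axiom, and their subsets are the independent sets of a matroid. -/

namespace Matroid

variable {α : Type*} {M : Matroid α} {B B' : Set α} {x : α}

lemma IsBase.exists_symm_exchange (hB : M.IsBase B) (hB' : M.IsBase B') (hx : x ∈ B \ B') :
    ∃ y ∈ B' \ B, M.IsBase (insert y (B \ {x})) ∧ M.IsBase (insert x (B' \ {y})) := by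
  have hxE : x ∈ M.E := hB.subset_ground hx.1
  have hC := hB'.fundCircuit_isCircuit hxE hx.2
  have hK := M.fundCocircuit_isCocircuit hx.1 hB
  obtain ⟨y, ⟨hyC, hyK⟩, hyx⟩ := (hC.isCocircuit_inter_nontrivial hK
    ⟨x, M.mem_fundCircuit x B', M.mem_fundCocircuit x B⟩).exists_ne x
  have hyB' : y ∈ B' := by
    simpa [hyx] using M.fundCircuit_subset_insert x B' hyC
  have hyB : y ∉ B := fun hyB ↦ hyx <| (M.fundCocircuit_inter_eq hx.1).subset ⟨hyK, hyB⟩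
  have hyE : y ∈ M.E := hB'.subset_ground hyB'
  refine ⟨y, ⟨hyB', hyB⟩, hB.exchange_isBase_of_indep hyB ?_,
    hB'.exchange_isBase_of_indep hx.2 ?_⟩
  · rw [hB.mem_fundCocircuit_iff_mem_fundCircuit,
      hB.indep.mem_fundCircuit_iff (by rwa [hB.closure_eq]) hyB] at hyK
    rwa [insert_sdiff_singleton_comm hyx]
  · rw [hB'.indep.mem_fundCircuit_iff (by rwa [hB'.closure_eq]) hx.2] at hyC
    rwa [insert_sdiff_singleton_comm (Ne.symm hyx)]

end Matroid

lemma setWeight_insert_sdiff_singleton_add {α : Type*} (w : α → NNReal) {B : Set α} {x y : α}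
    (hB : B.Finite) (hx : x ∈ B) (hy : y ∉ B) :
    setWeight w (insert y (B \ {x})) + w x = setWeight w B + w y := by
  have hyB : y ∉ B \ {x} := fun h ↦ hy h.1
  have hxB : x ∉ B \ {x} := fun h ↦ h.2 rfl
  have hB_eq : setWeight w B = w x + setWeight w (B \ {x}) := by
    rw [setWeight, setWeight, ← finsum_mem_insert w hxB hB.sdiff, insert_sdiff_self_of_mem hx]
  rw [setWeight, finsum_mem_insert w hyB hB.sdiff, ← setWeight, hB_eq]
  ring

section MaxWeightBase

variable {α : Type*} {M : Matroid α} {w : α → NNReal}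

variable (M w) in
lemma MaxWeightBase.exists [M.Finite] :
    ∃ B, MaxWeightBase M w B :=
  Set.exists_max_image {B | M.IsBase B} (setWeight w)
    (M.ground_finite.finite_subsets.subset fun _ hB ↦ hB.subset_ground) M.exists_isBase

lemma MaxWeightBase.exchangeProperty [M.Finite] :
    Matroid.ExchangeProperty (MaxWeightBase M w) := by
  rintro B B' ⟨hB, hBmax⟩ ⟨hB', hB'max⟩ x hx
  obtain ⟨y, hy, hBy, hB'x⟩ := hB.exists_symm_exchange hB' hx
  have hxy : w x ≤ w y := by
    refine le_of_add_le_add_left (a := setWeight w B') ?_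
    calc setWeight w B' + w x
        = setWeight w (insert x (B' \ {y})) + w y :=
          (setWeight_insert_sdiff_singleton_add w hB'.finite hy.1 hx.2).symm
      _ ≤ setWeight w B' + w y := add_le_add_left (hB'max _ hB'x) _
  refine ⟨y, hy, hBy, fun B₂ hB₂ ↦ (hBmax B₂ hB₂).trans ?_⟩
  refine le_of_add_le_add_right (a := w x) ?_
  calc setWeight w B + w x
      ≤ setWeight w B + w y := add_le_add_right hxy _
    _ = setWeight w (insert y (B \ {x})) + w x :=
        (setWeight_insert_sdiff_singleton_add w hB.finite hx.1 hy.2).symm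

variable (M w) in
noncomputable def Matroid.maxWeight [M.Finite] : Matroid α :=
  Matroid.ofIsBaseOfFinite M.ground_finite (MaxWeightBase M w) (MaxWeightBase.exists M w)
    MaxWeightBase.exchangeProperty fun _ hB ↦ hB.1.subset_ground

@[simp]
lemma Matroid.maxWeight_ground [M.Finite] : (M.maxWeight w).E = M.E := rfl

lemma Matroid.maxWeight_indep_iff [M.Finite] {S : Set α} :
    (M.maxWeight w).Indep S ↔ ∃ B, MaxWeightBase M w B ∧ S ⊆ B := by
  rw [Matroid.indep_iff, Matroid.maxWeight, Matroid.ofIsBaseOfFinite_isBase]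

end MaxWeightBase

theorem stmt_5 {α : Type*} (M : Matroid α) [M.Finite] (w : α → NNReal) :
    ∃ Mstar : Matroid α, Mstar.E = M.E ∧
      ∀ S : Set α, Mstar.Indep S ↔ ∃ B, MaxWeightBase M w B ∧ S ⊆ B :=
  ⟨M.maxWeight w, M.maxWeight_ground, fun _ ↦ M.maxWeight_indep_iff⟩
end

section
/- Let M = (E, I) be a matroid with weights w : E → ℝ≥0, and let B and B* be two maximum-weight bases of M. For a real number t, let B_{>t} = {e ∈ B : w(e) > t}. Then for every t, |B_{>t}| = |B*_{>t}|. -/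
open Set

/-!
If `B` had more elements of weight `> t` than `B*`, augmenting the heavy part of `B*` from the
heavy part of `B` gives a heavy `e ∉ B*` that can be added to it independently. Exchanging `e`
into `B*` through its fundamental circuit removes some `f ∈ B*` that is not heavy, so the new
base outweighs `B*` by `w e - w f > 0`, contradicting the maximality of `B*`.
-/

section

variable {α : Type*}

lemma setWeight_insert_sdiff_add (w : α → NNReal) {S : Set α} {e f : α} (hS : S.Finite)
    (he : e ∉ S) (hf : f ∈ S) :
    setWeight w (insert e S \ {f}) + w f = setWeight w S + w e := by
  have hD : (S \ {f}).Finite := hS.sdiff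
  have hS' : setWeight w S = w f + setWeight w (S \ {f}) := by
    conv_lhs => rw [← insert_sdiff_self_of_mem hf]
    exact finsum_mem_insert w (fun h => h.2 rfl) hD
  rw [← insert_sdiff_singleton_comm (ne_of_mem_of_not_mem hf he).symm, hS', setWeight,
    finsum_mem_insert w (fun h => he h.1) hD, setWeight]
  ring

namespace Matroid

variable {M : Matroid α} {B I : Set α} {e : α}

lemma IsBase.exists_isBase_insert_sdiff_of_insert_indep (hB : M.IsBase B) (heB : e ∉ B)
    (hI : M.Indep (insert e I)) :
    ∃ f ∈ B \ I, M.IsBase (insert e B \ {f}) := by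
  have heE : e ∈ M.E := hI.subset_ground (mem_insert e I)
  have hC := hB.fundCircuit_isCircuit heE heB
  obtain ⟨f, hfC, hfI⟩ := not_subset.1 fun h => hC.not_indep (hI.subset h)
  have hfB : f ∈ B := (M.fundCircuit_subset_insert e B hfC).resolve_left
    fun h => hfI (h ▸ mem_insert e I)
  refine ⟨f, ⟨hfB, fun h => hfI (mem_insert_of_mem e h)⟩, ?_⟩
  exact hB.exchange_isBase_of_indep' hfB heB
    ((hB.indep.mem_fundCircuit_iff (by rwa [hB.closure_eq]) heB).1 hfC)

end Matroid

namespace MaxWeightBase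

variable {M : Matroid α} [M.RankFinite] {w : α → NNReal} {B B' : Set α}

lemma ncard_sep_lt_le (hB : MaxWeightBase M w B) (hB' : MaxWeightBase M w B') (t : NNReal) :
    {x ∈ B | t < w x}.ncard ≤ {x ∈ B' | t < w x}.ncard := by
  by_contra! hlt
  have hI : M.Indep {x ∈ B' | t < w x} := hB'.1.indep.subset (sep_subset _ _)
  have hJ : M.Indep {x ∈ B | t < w x} := hB.1.indep.subset (sep_subset _ _)
  obtain ⟨e, ⟨⟨-, hte⟩, heI⟩, hins⟩ := hI.augment hJ <| by
    rw [← hI.finite.cast_ncard_eq, ← hJ.finite.cast_ncard_eq]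
    exact_mod_cast hlt
  have heB' : e ∉ B' := fun h => heI ⟨h, hte⟩
  obtain ⟨f, ⟨hfB', hfI⟩, hbase⟩ := hB'.1.exists_isBase_insert_sdiff_of_insert_indep heB' hins
  have hft : w f ≤ t := not_lt.1 fun h => hfI ⟨hfB', h⟩
  exact (add_lt_add_of_le_of_lt (hB'.2 _ hbase) (hft.trans_lt hte)).ne
    (setWeight_insert_sdiff_add w hB'.1.finite heB' hfB')

end MaxWeightBase

end

theorem stmt_17 {α : Type*} (M : Matroid α) [M.Finite]
    (w : α → NNReal) (B Bstar : Set α)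
    (hB : MaxWeightBase M w B) (hBstar : MaxWeightBase M w Bstar) :
    ∀ t : NNReal, {x ∈ B | t < w x}.ncard = {x ∈ Bstar | t < w x}.ncard := fun t =>
  (hB.ncard_sep_lt_le hBstar t).antisymm (hBstar.ncard_sep_lt_le hB t)
end

section
/- Let M = (E, I) be a matroid with weights w : E → ℝ≥0 and elements E = {e₁,…,e_n} ordered by non-increasing weight. Let B be a basis of M such that for every k ∈ {1,…,n}, B_{≤k} is a maximum-cardinality independent subset of E_{≤k}. Then B is a maximum-weight basis of M. -/
open Set

/-! Any base `B'` is independent, so on every prefix `e₁, …, e_k` it has at most as many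
elements as `B`. For non-increasing weights this prefix domination already forces
`w(B') ≤ w(B)`. -/

namespace Finset

variable {β M : Type*} [LinearOrder β] [AddCommMonoid M] [PartialOrder M] [IsOrderedAddMonoid M]

/- Induction on the largest element `m` of `b'`: it is matched with the largest element `x ≤ m`
of `b`, which exists and carries at least the weight of `m`; erasing both preserves the
prefix-domination hypothesis. -/
theorem sum_le_sum_of_card_filter_le {f : β → M} (hf : Antitone f) (hf0 : ∀ x, 0 ≤ f x)
    [DecidableEq β] (b b' : Finset β)
    (hdom : ∀ k, #(b'.filter (· ≤ k)) ≤ #(b.filter (· ≤ k))) :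
    ∑ x ∈ b', f x ≤ ∑ x ∈ b, f x := by
  induction b' using Finset.induction_on_max generalizing b with
  | empty => simpa using sum_nonneg fun x _ => hf0 x
  | insert m s hlt ih =>
    have hms : m ∉ s := fun h => (hlt m h).false
    have hsm : #s + 1 ≤ #(b.filter (· ≤ m)) := by
      simpa [filter_insert, filter_true_of_mem fun x hx => (hlt x hx).le, hms] using hdom m
    have hne : (b.filter (· ≤ m)).Nonempty := card_pos.1 (by omega)
    set x := (b.filter (· ≤ m)).max' hne
    obtain ⟨hxb, hxm⟩ := mem_filter.1 (max'_mem _ hne)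
    have hdom' : ∀ k, #(s.filter (· ≤ k)) ≤ #((b.erase x).filter (· ≤ k)) := by
      intro k
      rw [filter_erase]
      by_cases hxk : x ≤ k
      · rw [card_erase_of_mem (mem_filter.2 ⟨hxb, hxk⟩)]
        by_cases hmk : m ≤ k
        · have := hdom k
          rw [filter_insert, if_pos hmk, card_insert_of_notMem (by simp [hms])] at this
          omega
        · have hsub : b.filter (· ≤ m) ⊆ b.filter (· ≤ k) := fun y hy =>
            mem_filter.2 ⟨(mem_filter.1 hy).1, (le_max' _ y hy).trans hxk⟩
          have := card_le_card hsub
          have := card_le_card (filter_subset (· ≤ k) s)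
          omega
      · rw [erase_eq_of_notMem (by simp [hxk])]
        exact (card_le_card (filter_subset_filter _ (subset_insert m s))).trans (hdom k)
    calc ∑ y ∈ insert m s, f y = f m + ∑ y ∈ s, f y := sum_insert hms
      _ ≤ f x + ∑ y ∈ b.erase x, f y := add_le_add (hf hxm) (ih _ hdom')
      _ = ∑ y ∈ b, f y := add_sum_erase b f hxb

end Finset

section Enumeration

open Finset

variable {α ι : Type*} [Fintype ι] {e : ι → α}

theorem setWeight_eq_sum_filter (hinj : Function.Injective e) (w : α → NNReal) {S : Set α}
    (hS : S ⊆ range e) [DecidablePred (e · ∈ S)] :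
    setWeight w S = ∑ j ∈ univ.filter (e · ∈ S), w (e j) := by
  have hSe : S = e '' ↑(univ.filter (e · ∈ S)) := by
    ext x
    constructor
    · intro hx
      obtain ⟨j, rfl⟩ := hS hx
      exact ⟨j, by simpa using hx, rfl⟩
    · aesop
  rw [setWeight]
  conv_lhs => rw [hSe]
  rw [finsum_mem_image hinj.injOn, finsum_mem_coe_finset]

variable [LinearOrder ι]

theorem ncard_prefix_eq_card_filter (hinj : Function.Injective e) (S : Set α)
    [DecidablePred (e · ∈ S)] (k : ι) :
    {x ∈ S | ∃ j, j ≤ k ∧ x = e j}.ncard = #((univ.filter (e · ∈ S)).filter (· ≤ k)) := by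
  have : {x ∈ S | ∃ j, j ≤ k ∧ x = e j} = e '' ↑((univ.filter (e · ∈ S)).filter (· ≤ k)) := by
    ext x
    aesop
  rw [this, ncard_image_of_injective _ hinj, ncard_coe_finset]

end Enumeration

theorem stmt_19_general {α : Type*} (M : Matroid α) (w : α → NNReal)
    (n : ℕ) (e : Fin n → α) (hinj : Function.Injective e)
    (hground : M.E = Set.range e)
    (hmono : ∀ i j : Fin n, i ≤ j → w (e j) ≤ w (e i))
    (B : Set α) (hB : M.IsBase B)
    (hpre : ∀ k : Fin n,
      M.Indep {x ∈ B | ∃ j : Fin n, j ≤ k ∧ x = e j} ∧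
      ∀ I, I ⊆ e '' {j | j ≤ k} → M.Indep I →
        I.ncard ≤ {x ∈ B | ∃ j : Fin n, j ≤ k ∧ x = e j}.ncard) :
    MaxWeightBase M w B := by
  classical
  refine ⟨hB, fun B' hB' => ?_⟩
  rw [setWeight_eq_sum_filter hinj w (hground ▸ hB'.subset_ground),
    setWeight_eq_sum_filter hinj w (hground ▸ hB.subset_ground)]
  refine Finset.sum_le_sum_of_card_filter_le (fun i j hij => hmono i j hij)
    (fun _ => zero_le) _ _ fun k => ?_
  rw [← ncard_prefix_eq_card_filter hinj, ← ncard_prefix_eq_card_filter hinj]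
  refine (hpre k).2 _ ?_ (hB'.indep.subset (sep_subset _ _))
  rintro _ ⟨-, j, hjk, rfl⟩
  exact ⟨j, hjk, rfl⟩

theorem stmt_19 {α : Type*} (M : Matroid α) [M.Finite] (w : α → NNReal)
    (n : ℕ) (e : Fin n → α) (hinj : Function.Injective e)
    (hground : M.E = Set.range e)
    (hmono : ∀ i j : Fin n, i ≤ j → w (e j) ≤ w (e i))
    (B : Set α) (hB : M.IsBase B)
    (hpre : ∀ k : Fin n,
      M.Indep {x ∈ B | ∃ j : Fin n, j ≤ k ∧ x = e j} ∧
      ∀ I, I ⊆ e '' {j | j ≤ k} → M.Indep I →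
        I.ncard ≤ {x ∈ B | ∃ j : Fin n, j ≤ k ∧ x = e j}.ncard) :
    MaxWeightBase M w B :=
  stmt_19_general M w n e hinj hground hmono B hB hpre
end
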